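/- The word-level spelling length λ is cyclically invariant: for a word U = (U(1),...,U(k)) over the alphabet of a free group, λ((U(k), U(1),...,U(k-1))) = λ(U). -/

import Mathlib

/-- A letter in the alphabet `{X_1,…,X_N, X_1⁻¹,…,X_N⁻¹}`: `(i, true)` is `X_i` and
`(i, false)` is `X_i⁻¹`. -/
abbrev Letter (N : ℕ) := Fin N × Bool

/-- The inverse letter. -/
def invLetter {N : ℕ} (x : Letter N) : Letter N := (x.1, !x.2)

/-- `lam` is the word-level spelling length: `λ(e) = 0` and
`λ(U) = min(1 + λ(U_{2:k}), min_{j : U(j) = U(1)⁻¹} λ(U_{2:j-1}) + λ(U_{j+1:k}))`. -/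
def IsWordSpellingLength {N : ℕ} (lam : List (Letter N) → ℕ) : Prop :=
  lam [] = 0 ∧
    ∀ (x : Letter N) (rest : List (Letter N)),
      lam (x :: rest) =
        ((List.range rest.length).filterMap fun j =>
            if rest[j]? = some (invLetter x) then
              some (lam (rest.take j) + lam (rest.drop (j + 1)))
            else none).foldl min (1 + lam rest)

/-!
Intuitively `λ(W)` is the least number of letters left unmatched by a non-crossing matching of
letters of `W` with inverse letters, and such matchings are invariant under rotation.
Formally, by strong induction on the length: rotation invariance for shorter words gives
`λ(x :: U) ≤ λ(U ++ [x])`, by examining the branch of the recursion that attains `λ` at the first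
letter of `U ++ [x]`. Since a single rotation can then only increase `λ`, and `|W|` rotations give
back `W`, every rotation preserves `λ`.
-/

theorem List.foldl_min_mem_and_le {α : Type*} [LinearOrder α] (a : α) (l : List α) :
    l.foldl min a ∈ a :: l ∧ ∀ b ∈ a :: l, l.foldl min a ≤ b :=
  List.min?_eq_some_iff.mp List.min?_cons'

theorem List.append_cons_eq_append_iff {α : Type*} {A C X Y : List α} {b : α} :
    A ++ b :: C = X ++ Y ↔
      (∃ B, X = A ++ b :: B ∧ C = B ++ Y) ∨ ∃ W, A = X ++ W ∧ Y = W ++ b :: C := by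
  rw [List.append_eq_append_iff]
  constructor
  · rintro (⟨_ | ⟨c, B⟩, hX, hbC⟩ | ⟨W, hA, hY⟩)
    · exact Or.inr ⟨[], by simp [hX], by simpa using hbC.symm⟩
    · obtain ⟨rfl, rfl⟩ := List.cons_eq_cons.mp hbC
      exact Or.inl ⟨B, hX, rfl⟩
    · exact Or.inr ⟨W, hA, hY⟩
  · rintro (⟨B, hX, hC⟩ | ⟨W, hA, hY⟩)
    · exact Or.inl ⟨b :: B, hX, by simp [hC]⟩
    · exact Or.inr ⟨W, hA, hY⟩

theorem List.rotate_one_eq_of_le_rotate_one {α β : Type*} [PartialOrder β] (f : List α → β)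
    {n : ℕ} (hf : ∀ W : List α, W.length = n → f W ≤ f (W.rotate 1))
    (W : List α) (hW : W.length = n) : f (W.rotate 1) = f W := by
  have le_rotate : ∀ k (W : List α), W.length = n → f W ≤ f (W.rotate k) := by
    intro k
    induction k with
    | zero => intro W _; rw [List.rotate_zero]
    | succ k ih =>
      intro W hW
      rw [← List.rotate_rotate]
      exact (ih W hW).trans (hf _ (by rw [List.length_rotate, hW]))
  refine le_antisymm ?_ (le_rotate 1 W hW)
  rcases W with _ | ⟨a, V⟩
  · rfl
  · calc f ((a :: V).rotate 1) ≤ f (((a :: V).rotate 1).rotate V.length) :=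
          le_rotate _ _ (by rw [List.length_rotate, hW])
      _ = f (a :: V) := by
          rw [List.rotate_rotate, add_comm, ← List.length_cons, List.rotate_length]

variable {N : ℕ}

@[simp]
theorem invLetter_invLetter (x : Letter N) : invLetter (invLetter x) = x := by
  simp [invLetter]

def cancelBranches (lam : List (Letter N) → ℕ) (x : Letter N) (R : List (Letter N)) : List ℕ :=
  (List.range R.length).filterMap fun j =>
    if R[j]? = some (invLetter x) then some (lam (R.take j) + lam (R.drop (j + 1))) else none

theorem mem_cancelBranches {lam : List (Letter N) → ℕ} {x : Letter N} {R : List (Letter N)}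
    {b : ℕ} :
    b ∈ cancelBranches lam x R ↔ ∃ A C, R = A ++ invLetter x :: C ∧ lam A + lam C = b := by
  simp only [cancelBranches, List.mem_filterMap, List.mem_range, Option.ite_none_right_eq_some,
    Option.some.injEq]
  constructor
  · rintro ⟨j, hj, hRj, rfl⟩
    refine ⟨R.take j, R.drop (j + 1), ?_, rfl⟩
    rw [← (List.getElem?_eq_some_iff.mp hRj).2, List.getElem_cons_drop, List.take_append_drop]
  · rintro ⟨A, C, rfl, rfl⟩
    exact ⟨A.length, by simp, by simp, by simp [List.drop_append, List.drop_eq_nil_of_le]⟩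

namespace IsWordSpellingLength

variable {lam : List (Letter N) → ℕ}

theorem cons_le_one_add (h : IsWordSpellingLength lam) (x : Letter N) (R : List (Letter N)) :
    lam (x :: R) ≤ 1 + lam R := by
  rw [h.2]
  exact (List.foldl_min_mem_and_le _ _).2 _ List.mem_cons_self

theorem cons_le_of_cancel (h : IsWordSpellingLength lam) (x : Letter N)
    (A C : List (Letter N)) : lam (x :: (A ++ invLetter x :: C)) ≤ lam A + lam C := by
  rw [h.2]
  exact (List.foldl_min_mem_and_le _ _).2 _ <|
    List.mem_cons_of_mem _ (mem_cancelBranches.mpr ⟨A, C, rfl, rfl⟩)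

theorem cons_eq_one_add_or_cancel (h : IsWordSpellingLength lam) (x : Letter N)
    (R : List (Letter N)) :
    lam (x :: R) = 1 + lam R ∨
      ∃ A C, R = A ++ invLetter x :: C ∧ lam (x :: R) = lam A + lam C := by
  rw [h.2]
  rcases List.mem_cons.mp (List.foldl_min_mem_and_le (1 + lam R) (cancelBranches lam x R)).1
    with hone | hcancel
  · exact Or.inl hone
  · obtain ⟨A, C, hR, hAC⟩ := mem_cancelBranches.mp hcancel
    exact Or.inr ⟨A, C, hR, hAC.symm⟩

theorem append_cons_le_one_add (h : IsWordSpellingLength lam) :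
    ∀ (X : List (Letter N)) (c : Letter N) (Y : List (Letter N)),
      lam (X ++ c :: Y) ≤ 1 + lam (X ++ Y)
  | [], c, Y => h.cons_le_one_add c Y
  | d :: X, c, Y => by
    simp only [List.cons_append]
    rcases h.cons_eq_one_add_or_cancel d (X ++ Y) with hone | ⟨A, C, hXY, hAC⟩
    · calc lam (d :: (X ++ c :: Y)) ≤ 1 + lam (X ++ c :: Y) := h.cons_le_one_add d _
        _ ≤ 1 + (1 + lam (X ++ Y)) := by gcongr; exact h.append_cons_le_one_add X c Y
        _ = 1 + lam (d :: (X ++ Y)) := by rw [hone]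
    rw [hAC]
    rcases List.append_cons_eq_append_iff.mp hXY.symm with ⟨B, rfl, rfl⟩ | ⟨W, rfl, rfl⟩
    · calc lam (d :: (A ++ invLetter d :: B ++ c :: Y))
            = lam (d :: (A ++ invLetter d :: (B ++ c :: Y))) := by simp
        _ ≤ lam A + lam (B ++ c :: Y) := h.cons_le_of_cancel d A _
        _ ≤ lam A + (1 + lam (B ++ Y)) := by gcongr; exact h.append_cons_le_one_add B c Y
        _ = 1 + (lam A + lam (B ++ Y)) := by ring
    · calc lam (d :: (X ++ c :: (W ++ invLetter d :: C)))
            = lam (d :: ((X ++ c :: W) ++ invLetter d :: C)) := by simp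
        _ ≤ lam (X ++ c :: W) + lam C := h.cons_le_of_cancel d _ C
        _ ≤ (1 + lam (X ++ W)) + lam C := by gcongr; exact h.append_cons_le_one_add X c W
        _ = 1 + (lam (X ++ W) + lam C) := by ring
termination_by X => X.length

theorem cons_cons_le_of_cancel (h : IsWordSpellingLength lam) (x y : Letter N)
    (V₁ V₂ : List (Letter N)) :
    lam (x :: y :: (V₁ ++ invLetter y :: V₂)) ≤ lam V₁ + lam (x :: V₂) := by
  rcases h.cons_eq_one_add_or_cancel x V₂ with hone | ⟨W₁, W₂, rfl, hW⟩
  · calc lam (x :: y :: (V₁ ++ invLetter y :: V₂))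
          ≤ 1 + lam (y :: (V₁ ++ invLetter y :: V₂)) := h.cons_le_one_add x _
      _ ≤ 1 + (lam V₁ + lam V₂) := by gcongr; exact h.cons_le_of_cancel y V₁ V₂
      _ = lam V₁ + lam (x :: V₂) := by rw [hone]; ring
  · calc lam (x :: y :: (V₁ ++ invLetter y :: (W₁ ++ invLetter x :: W₂)))
          = lam (x :: ((y :: (V₁ ++ invLetter y :: W₁)) ++ invLetter x :: W₂)) := by simp
      _ ≤ lam (y :: (V₁ ++ invLetter y :: W₁)) + lam W₂ := h.cons_le_of_cancel x _ W₂
      _ ≤ (lam V₁ + lam W₁) + lam W₂ := by gcongr; exact h.cons_le_of_cancel y V₁ W₁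
      _ = lam V₁ + lam (x :: (W₁ ++ invLetter x :: W₂)) := by rw [hW]; ring

theorem cons_le_append_singleton (h : IsWordSpellingLength lam) {U : List (Letter N)}
    (hU : ∀ (V : List (Letter N)) (y : Letter N), V.length < U.length →
      lam (y :: V) = lam (V ++ [y]))
    (x : Letter N) : lam (x :: U) ≤ lam (U ++ [x]) := by
  rcases U with _ | ⟨y, V⟩
  · rfl
  rw [List.cons_append]
  rcases h.cons_eq_one_add_or_cancel y (V ++ [x]) with hone | ⟨A, C, hVx, hAC⟩
  · rw [hone, ← hU V x (by simp)]
    exact h.append_cons_le_one_add [x] y V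
  rw [hAC]
  rcases List.append_cons_eq_append_iff.mp hVx.symm with ⟨B, rfl, rfl⟩ | ⟨W, rfl, hx⟩
  · rw [← hU B x (by simp only [List.length_append, List.length_cons]; omega)]
    exact h.cons_cons_le_of_cancel x y A B
  · obtain ⟨rfl, rfl, rfl⟩ : W = [] ∧ x = invLetter y ∧ C = [] := by
      rcases W with _ | ⟨w, W⟩ <;> simp_all
    simpa [h.1] using h.cons_le_of_cancel (invLetter y) [] V

end IsWordSpellingLength

/-- the word-level spelling length is cyclically invariant:
`λ((U(k), U(1),…,U(k-1))) = λ(U)`. -/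
theorem wordSpellingLength_cyclic {N : ℕ}
    (lam : List (Letter N) → ℕ) (hlam : IsWordSpellingLength lam)
    (U : List (Letter N)) (x : Letter N) :
    lam (x :: U) = lam (U ++ [x]) := by
  induction hn : U.length using Nat.strong_induction_on generalizing U x with
  | _ n ih =>
    have rotate_le : ∀ W : List (Letter N), W.length = n + 1 → lam W ≤ lam (W.rotate 1) := by
      rintro (_ | ⟨y, V⟩) hV
      · rfl
      rw [List.rotate_cons_succ, List.rotate_zero]
      exact hlam.cons_le_append_singleton
        (fun V' y' hV' => ih V'.length (by simp only [List.length_cons] at hV; omega) V' y' rfl) y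
    have := List.rotate_one_eq_of_le_rotate_one lam rotate_le (x :: U) (by simp [hn])
    rwa [List.rotate_cons_succ, List.rotate_zero, eq_comm] at this
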